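/- Let X(Ω) be a Banach space of holomorphic functions on an open set Ω ⊆ ℂ^m in which polynomials are dense and the coordinate multiplications M_{z_j} are bounded. A commuting m-tuple A = (A_1,...,A_m) of bounded operators on X(Ω) is simultaneously similar to M = (M_{z_1},...,M_{z_m}) if and only if A has a cyclic vector u and there is c > 0 such that c^{-1}‖p‖ ≤ ‖p(A)u‖ ≤ c‖p‖ for all polynomials p ∈ ℂ[z_1,...,z_m]. -/

import Mathlib

open MvPolynomial

/-- Polynomial functional calculus for a (commuting) tuple of bounded operators:
`p(A) = Σ_d coeff_d • A₁^{d₁} ⋯ A_m^{d_m}`. -/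
noncomputable def evalT {m : ℕ} {X : Type*} [NormedAddCommGroup X] [NormedSpace ℂ X]
    (A : Fin m → X →L[ℂ] X) (p : MvPolynomial (Fin m) ℂ) : X →L[ℂ] X :=
  ∑ d ∈ p.support, p.coeff d • ((List.finRange m).map fun i => A i ^ d i).prod

section Aux

variable {m : ℕ} {X : Type*} [NormedAddCommGroup X] [NormedSpace ℂ X]

/-- `A₁^{d₁} ⋯ A_m^{d_m}` -/
noncomputable def monProd (A : Fin m → X →L[ℂ] X) (d : Fin m →₀ ℕ) : X →L[ℂ] X :=
  ((List.finRange m).map fun i => A i ^ d i).prod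

lemma evalT_eq_sum (A : Fin m → X →L[ℂ] X) (p : MvPolynomial (Fin m) ℂ) :
    evalT A p = (AddMonoidAlgebra.coeff p).sum fun d c => c • monProd A d := rfl

lemma evalT_add (A : Fin m → X →L[ℂ] X) (p q : MvPolynomial (Fin m) ℂ) :
    evalT A (p + q) = evalT A p + evalT A q := by
  rw [evalT_eq_sum, evalT_eq_sum, evalT_eq_sum]
  exact Finsupp.sum_add_index' (fun d => zero_smul ℂ _) (fun d b₁ b₂ => add_smul _ _ _)

lemma evalT_monomial (A : Fin m → X →L[ℂ] X) (d : Fin m →₀ ℕ) (c : ℂ) :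
    evalT A (monomial d c) = c • monProd A d := by
  rw [evalT_eq_sum, ← single_eq_monomial]
  exact Finsupp.sum_single_index (h := fun d c => c • monProd A d) (zero_smul ℂ _)

lemma evalT_C_mul (A : Fin m → X →L[ℂ] X) (c : ℂ) (p : MvPolynomial (Fin m) ℂ) :
    evalT A (C c * p) = c • evalT A p := by
  induction p using MvPolynomial.induction_on' with
  | monomial d a =>
    rw [show (C c : MvPolynomial (Fin m) ℂ) = monomial 0 c from rfl, monomial_mul,
      zero_add, evalT_monomial, evalT_monomial, mul_smul]
  | add p q hp hq =>
    rw [mul_add, evalT_add, evalT_add, hp, hq, smul_add]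

lemma evalT_smul (A : Fin m → X →L[ℂ] X) (c : ℂ) (p : MvPolynomial (Fin m) ℂ) :
    evalT A (c • p) = c • evalT A p := by
  rw [smul_eq_C_mul, evalT_C_mul]

/-- `evalT A · u` as a linear map. -/
noncomputable def evalLM (A : Fin m → X →L[ℂ] X) (u : X) : MvPolynomial (Fin m) ℂ →ₗ[ℂ] X where
  toFun p := evalT A p u
  map_add' p q := by rw [evalT_add]; rfl
  map_smul' c p := by rw [evalT_smul]; rfl

lemma prod_single_add (A : Fin m → X →L[ℂ] X) (hA : ∀ i j, A i * A j = A j * A i)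
    (j : Fin m) (d : Fin m →₀ ℕ) :
    ∀ (l : List (Fin m)), l.Nodup →
      (l.map fun i => A i ^ (Finsupp.single j 1 + d : Fin m →₀ ℕ) i).prod =
        if j ∈ l then A j * (l.map fun i => A i ^ d i).prod
          else (l.map fun i => A i ^ d i).prod := by
  have he : ∀ i : Fin m, (Finsupp.single j 1 + d : Fin m →₀ ℕ) i
      = (if j = i then 1 else 0) + d i := fun i => by
    rw [Finsupp.add_apply, Finsupp.single_apply]
  intro l
  induction l with
  | nil => simp
  | cons i l ih =>
    intro hnd
    obtain ⟨hil, hnd'⟩ := List.nodup_cons.mp hnd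
    simp only [List.map_cons, List.prod_cons, List.mem_cons]
    by_cases hij : j = i
    · subst hij
      have hjl : j ∉ l := hil
      rw [ih hnd', if_neg hjl, if_pos (Or.inl rfl), he, if_pos rfl]
      rw [pow_add, pow_one, mul_assoc]
    · rw [he, if_neg hij, zero_add, ih hnd']
      by_cases hjl : j ∈ l
      · rw [if_pos hjl, if_pos (Or.inr hjl)]
        have hc : Commute (A j) (A i ^ d i) := Commute.pow_right (hA j i) (d i)
        rw [← mul_assoc, ← hc.eq, mul_assoc]
      · rw [if_neg hjl, if_neg (by rintro (h | h) <;> [exact hij h; exact hjl h])]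

lemma monProd_single_add (A : Fin m → X →L[ℂ] X) (hA : ∀ i j, A i * A j = A j * A i)
    (j : Fin m) (d : Fin m →₀ ℕ) :
    monProd A (Finsupp.single j 1 + d) = A j * monProd A d := by
  rw [monProd, monProd, prod_single_add A hA j d _ (List.nodup_finRange m),
    if_pos (List.mem_finRange j)]

lemma evalT_X_mul (A : Fin m → X →L[ℂ] X) (hA : ∀ i j, A i * A j = A j * A i)
    (j : Fin m) (p : MvPolynomial (Fin m) ℂ) :
    evalT A (MvPolynomial.X j * p) = A j * evalT A p := by
  induction p using MvPolynomial.induction_on' with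
  | monomial d a =>
    rw [MvPolynomial.X, monomial_mul, one_mul, evalT_monomial, evalT_monomial,
      monProd_single_add A hA, mul_smul_comm]
  | add p q hp hq =>
    rw [mul_add, evalT_add, evalT_add, hp, hq, mul_add]

/-- Conjugation `B ↦ S⁻¹ B S` as a ring homomorphism on operators. -/
def conjRH (S : X ≃L[ℂ] X) : (X →L[ℂ] X) →+* (X →L[ℂ] X) where
  toFun B := (S.symm : X →L[ℂ] X) ∘L B ∘L (S : X →L[ℂ] X)
  map_one' := by ext x; simp
  map_mul' B C := by ext x; simp [ContinuousLinearMap.mul_apply]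
  map_zero' := by ext x; simp
  map_add' B C := by ext x; simp

lemma conjRH_smul (S : X ≃L[ℂ] X) (c : ℂ) (B : X →L[ℂ] X) :
    conjRH S (c • B) = c • conjRH S B := by ext x; simp [conjRH]

lemma evalT_conj (S : X ≃L[ℂ] X) (M : Fin m → X →L[ℂ] X) (p : MvPolynomial (Fin m) ℂ) :
    evalT (fun j => conjRH S (M j)) p = conjRH S (evalT M p) := by
  rw [evalT, evalT, map_sum]
  refine Finset.sum_congr rfl fun d _ => ?_
  rw [conjRH_smul]
  congr 1
  have h : (List.map (fun i => conjRH S (M i) ^ d i) (List.finRange m))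
      = List.map (⇑(conjRH S).toMonoidHom) (List.map (fun i => M i ^ d i) (List.finRange m)) := by
    rw [List.map_map]
    exact List.map_congr_left fun i _ => (map_pow (conjRH S) (M i) (d i)).symm
  rw [h, List.prod_hom]
  rfl

end Aux

/-- A commuting tuple on a Banach space of holomorphic functions is simultaneously similar to
the tuple of coordinate multiplications iff it has a cyclic vector realizing the polynomial
norm up to constants. -/
theorem stmt15 {m : ℕ} {X : Type*} [NormedAddCommGroup X] [NormedSpace ℂ X] [CompleteSpace X]
    (Ω : Set (Fin m → ℂ)) (hΩo : IsOpen Ω) (hΩne : Ω.Nonempty)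
    (ι : X →ₗ[ℂ] ((Fin m → ℂ) → ℂ))
    (hinj : ∀ x : X, (∀ z ∈ Ω, ι x z = 0) → x = 0)
    (hhol : ∀ x : X, DifferentiableOn ℂ (ι x) Ω)
    (P : MvPolynomial (Fin m) ℂ →ₗ[ℂ] X)
    (hP : ∀ p : MvPolynomial (Fin m) ℂ, ∀ z ∈ Ω, ι (P p) z = MvPolynomial.eval z p)
    (hPdense : Dense (Set.range P))
    (M : Fin m → X →L[ℂ] X)
    (hM : ∀ (j : Fin m) (x : X), ∀ z ∈ Ω, ι (M j x) z = z j * ι x z)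
    (A : Fin m → X →L[ℂ] X) (hA : ∀ i j, A i * A j = A j * A i) :
    (∃ S : X ≃L[ℂ] X, ∀ j, A j = (S.symm : X →L[ℂ] X) ∘L M j ∘L (S : X →L[ℂ] X)) ↔
    ∃ u : X, Dense {x : X | ∃ p : MvPolynomial (Fin m) ℂ, x = evalT A p u} ∧
      ∃ c : ℝ, 0 < c ∧ ∀ p : MvPolynomial (Fin m) ℂ,
        c⁻¹ * ‖P p‖ ≤ ‖evalT A p u‖ ∧ ‖evalT A p u‖ ≤ c * ‖P p‖ := by
  classical
  -- `ι` of powers of `M`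
  have hiMpow : ∀ (j : Fin m) (k : ℕ) (x : X), ∀ z ∈ Ω, ι ((M j ^ k) x) z = z j ^ k * ι x z := by
    intro j k
    induction k with
    | zero => intro x z hz; simp
    | succ k ih =>
      intro x z hz
      rw [pow_succ, ContinuousLinearMap.mul_apply, ih _ z hz, hM j x z hz, pow_succ]
      ring
  have hiList : ∀ (l : List (Fin m)) (d : Fin m →₀ ℕ) (x : X), ∀ z ∈ Ω,
      ι (((l.map fun i => M i ^ d i).prod) x) z = (l.map fun i => z i ^ d i).prod * ι x z := by
    intro l
    induction l with
    | nil => intro d x z hz; simp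
    | cons i l ih =>
      intro d x z hz
      rw [List.map_cons, List.prod_cons, ContinuousLinearMap.mul_apply,
        hiMpow i (d i) _ z hz, ih d x z hz, List.map_cons, List.prod_cons]
      ring
  have hiEval : ∀ (p : MvPolynomial (Fin m) ℂ) (x : X), ∀ z ∈ Ω,
      ι (evalT M p x) z = MvPolynomial.eval z p * ι x z := by
    intro p x z hz
    rw [evalT, ContinuousLinearMap.sum_apply, map_sum, Finset.sum_apply]
    have hterm : ∀ d ∈ p.support,
        ι ((p.coeff d • ((List.finRange m).map fun i => M i ^ d i).prod) x) z
        = p.coeff d * ((List.finRange m).map fun i => z i ^ d i).prod * ι x z := by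
      intro d _
      rw [ContinuousLinearMap.smul_apply, map_smul, Pi.smul_apply, smul_eq_mul,
        hiList _ d x z hz, mul_assoc]
    rw [Finset.sum_congr rfl hterm, MvPolynomial.eval_eq', Finset.sum_mul]
    refine Finset.sum_congr rfl fun d _ => ?_
    rw [Fin.prod_univ_def]
  -- action of `M j` and of `evalT M` on the dense polynomial range
  have hMP : ∀ (j : Fin m) (p : MvPolynomial (Fin m) ℂ),
      M j (P p) = P (MvPolynomial.X j * p) := by
    intro j p
    refine sub_eq_zero.mp (hinj _ fun z hz => ?_)
    rw [map_sub, Pi.sub_apply, hM j _ z hz, hP p z hz, hP _ z hz, map_mul,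
      MvPolynomial.eval_X, sub_self]
  have hMP1 : ∀ p : MvPolynomial (Fin m) ℂ, evalT M p (P 1) = P p := by
    intro p
    refine sub_eq_zero.mp (hinj _ fun z hz => ?_)
    rw [map_sub, Pi.sub_apply, hiEval p _ z hz, hP 1 z hz, hP p z hz, map_one, mul_one, sub_self]
  constructor
  · -- similarity ⇒ cyclic vector with norm control
    rintro ⟨S, hS⟩
    have hAc : A = fun j => conjRH S (M j) := funext fun j => hS j
    have hconj : ∀ p, evalT A p = (S.symm : X →L[ℂ] X) ∘L evalT M p ∘L (S : X →L[ℂ] X) := by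
      intro p
      rw [hAc, evalT_conj]
      rfl
    have hval : ∀ p, evalT A p (S.symm (P 1)) = S.symm (P p) := by
      intro p
      rw [hconj]
      simp only [ContinuousLinearMap.comp_apply, ContinuousLinearEquiv.coe_coe,
        ContinuousLinearEquiv.apply_symm_apply]
      rw [hMP1]
    refine ⟨S.symm (P 1), ?_, ?_⟩
    · have hset : {x : X | ∃ p, x = evalT A p (S.symm (P 1))} = Set.range (⇑S.symm ∘ ⇑P) := by
        ext x
        constructor
        · rintro ⟨p, rfl⟩; exact ⟨p, (hval p).symm⟩
        · rintro ⟨p, rfl⟩; exact ⟨p, (hval p).symm⟩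
      rw [hset]
      exact DenseRange.comp (Function.Surjective.denseRange S.symm.surjective)
        hPdense S.symm.continuous
    · set c : ℝ := max (max ‖(S : X →L[ℂ] X)‖ ‖(S.symm : X →L[ℂ] X)‖) 1 with hcdef
      have hc1 : (1:ℝ) ≤ c := le_max_right _ _
      have hc : (0:ℝ) < c := lt_of_lt_of_le one_pos hc1
      have hSc : ‖(S : X →L[ℂ] X)‖ ≤ c := le_trans (le_max_left _ _) (le_max_left _ _)
      have hSsc : ‖(S.symm : X →L[ℂ] X)‖ ≤ c := le_trans (le_max_right _ _) (le_max_left _ _)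
      refine ⟨c, hc, fun p => ?_⟩
      rw [hval p]
      constructor
      · have h1 : ‖P p‖ ≤ c * ‖S.symm (P p)‖ := by
          have h2 : ‖S (S.symm (P p))‖ ≤ ‖(S : X →L[ℂ] X)‖ * ‖S.symm (P p)‖ :=
            (S : X →L[ℂ] X).le_opNorm _
          rw [ContinuousLinearEquiv.apply_symm_apply] at h2
          exact h2.trans (mul_le_mul_of_nonneg_right hSc (norm_nonneg _))
        have := mul_le_mul_of_nonneg_left h1 (inv_nonneg.mpr hc.le)
        rwa [← mul_assoc, inv_mul_cancel₀ hc.ne', one_mul] at this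
      · have h2 : ‖S.symm (P p)‖ ≤ ‖(S.symm : X →L[ℂ] X)‖ * ‖P p‖ :=
          (S.symm : X →L[ℂ] X).le_opNorm _
        exact h2.trans (mul_le_mul_of_nonneg_right hSsc (norm_nonneg _))
  · -- cyclic vector with norm control ⇒ similarity
    rintro ⟨u, hcyc, c, hc, hbd⟩
    set q : MvPolynomial (Fin m) ℂ →ₗ[ℂ] X := evalLM A u with hqdef
    have hker : LinearMap.ker P ≤ LinearMap.ker q := by
      intro p hp
      rw [LinearMap.mem_ker] at hp ⊢
      have h2 := (hbd p).2
      rw [hp, norm_zero, mul_zero] at h2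
      exact norm_le_zero_iff.mp h2
    set f₀ : (LinearMap.range P) →ₗ[ℂ] X :=
      ((LinearMap.ker P).liftQ q hker).comp (LinearMap.quotKerEquivRange P).symm.toLinearMap
      with hf₀def
    have hf₀ : ∀ (p : MvPolynomial (Fin m) ℂ) (h : P p ∈ LinearMap.range P),
        f₀ ⟨P p, h⟩ = evalT A p u := by
      intro p h
      have hsymm : (LinearMap.quotKerEquivRange P).symm ⟨P p, h⟩
          = Submodule.Quotient.mk p := by
        rw [LinearEquiv.symm_apply_eq]
        exact Subtype.ext (by rw [LinearMap.quotKerEquivRange_apply_mk])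
      rw [hf₀def, LinearMap.comp_apply, LinearEquiv.coe_coe, hsymm, Submodule.liftQ_apply]
      rfl
    have hf₀bd : ∀ x : LinearMap.range P, ‖f₀ x‖ ≤ c * ‖x‖ := by
      rintro ⟨x, hx⟩
      obtain ⟨p, rfl⟩ := hx
      rw [hf₀ p (LinearMap.mem_range_self P p)]
      exact (hbd p).2
    set f := f₀.mkContinuous c hf₀bd with hfdef
    have hdenseP : DenseRange ⇑(LinearMap.range P).subtypeL := by
      have h : Set.range ⇑(LinearMap.range P).subtypeL = Set.range ⇑P := by
        ext x
        simp [Submodule.coe_subtypeL', LinearMap.mem_range]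
      rw [DenseRange, h]
      exact hPdense
    have hui : IsUniformInducing ⇑(LinearMap.range P).subtypeL :=
      isometry_subtype_coe.isUniformInducing
    set T := f.extend (LinearMap.range P).subtypeL with hTdef
    have hT : ∀ p : MvPolynomial (Fin m) ℂ, T (P p) = evalT A p u := by
      intro p
      have h := ContinuousLinearMap.extend_eq f hdenseP hui
        ⟨P p, LinearMap.mem_range_self P p⟩
      rw [hTdef]
      refine h.trans ?_
      rw [hfdef, LinearMap.mkContinuous_apply, hf₀ p (LinearMap.mem_range_self P p)]
    have hsub : Set.range ⇑P ⊆ {x : X | ‖x‖ ≤ c * ‖T x‖} := by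
      rintro _ ⟨p, rfl⟩
      have h1 := (hbd p).1
      rw [Set.mem_setOf_eq, hT p]
      calc ‖P p‖ = c * (c⁻¹ * ‖P p‖) := by
            rw [← mul_assoc, mul_inv_cancel₀ hc.ne', one_mul]
        _ ≤ c * ‖evalT A p u‖ := mul_le_mul_of_nonneg_left h1 hc.le
    have hlow : ∀ x : X, ‖x‖ ≤ c * ‖T x‖ := by
      have hcl : IsClosed {x : X | ‖x‖ ≤ c * ‖T x‖} :=
        isClosed_le continuous_norm (continuous_const.mul T.continuous.norm)
      intro x
      exact (hcl.closure_subset_iff.mpr hsub) (by rw [hPdense.closure_eq]; trivial)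
    have hanti : AntilipschitzWith ⟨c, hc.le⟩ ⇑T :=
      T.antilipschitz_of_bound (K := ⟨c, hc.le⟩) hlow
    have hkerT : LinearMap.ker (T : X →ₗ[ℂ] X) = ⊥ := LinearMap.ker_eq_bot.mpr hanti.injective
    have hclosedrange : IsClosed (Set.range ⇑T) :=
      hanti.isClosed_range T.uniformContinuous
    have hrangeT : LinearMap.range (T : X →ₗ[ℂ] X) = ⊤ := by
      rw [LinearMap.range_eq_top]
      intro y
      have hsub2 : {x : X | ∃ p : MvPolynomial (Fin m) ℂ, x = evalT A p u} ⊆ Set.range ⇑T := by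
        rintro x ⟨p, rfl⟩
        exact ⟨P p, hT p⟩
      exact (hclosedrange.closure_subset_iff.mpr hsub2) (by rw [hcyc.closure_eq]; trivial)
    set E := ContinuousLinearEquiv.ofBijective T hkerT hrangeT with hEdef
    have hEcoe : ∀ x, E x = T x := fun x => rfl
    refine ⟨E.symm, fun j => ?_⟩
    have hcomm : (A j ∘L T) = (T ∘L M j) := by
      have heq : ⇑(A j ∘L T) = ⇑(T ∘L M j) := by
        refine (show DenseRange ⇑P from hPdense).equalizer
          (A j ∘L T).continuous (T ∘L M j).continuous ?_
        funext p
        simp only [Function.comp_apply, ContinuousLinearMap.comp_apply]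
        rw [hT p, hMP j p, hT (MvPolynomial.X j * p), evalT_X_mul A hA j p]
        rfl
      exact ContinuousLinearMap.ext fun x => congrFun heq x
    ext x
    have h1 : T (E.symm x) = x := by
      rw [← hEcoe]
      exact E.apply_symm_apply x
    have h2 := congrArg (fun B : X →L[ℂ] X => B (E.symm x)) hcomm
    simp only [ContinuousLinearMap.comp_apply] at h2
    rw [h1] at h2
    simp only [ContinuousLinearMap.comp_apply, ContinuousLinearEquiv.coe_coe,
      ContinuousLinearEquiv.symm_symm]
    rw [h2, hEcoe]
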